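/- Fix an integer k ≥ 1 and α ∈ (−1/k, −1/(k+1)), fix n ≥ 1 and set p = n^α (real power). Let i, j be integers with 0 ≤ i, j ≤ n − 1 and let Ā = (A₁,A₂,A₃,A₄) be a quadruple of subsets of [n] with |A₁| = |A₂| = i + 1 and |A₃| = |A₄| = j + 1 that does NOT have an independent set. Then: (i) n^{ver(Ā)} · p^{pair(Ā)} ≤ n^{4k} · p^{4·C(k+1,2) − 2}; and (ii) if moreover i + j ≥ 16k + 15, then n^{ver(Ā)} · p^{pair(Ā)} ≤ n^{4k} · p^{4·C(k+1,2) − 2} / n^{2k + 2(i + j − 16k − 15)}. -/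

import Mathlib

open Finset MeasureTheory Filter Real

noncomputable section

open scoped Classical

/-- The edge set `E_n`: unordered pairs of distinct elements of `[n]`. -/
abbrev Edge (n : ℕ) := {e : Sym2 (Fin n) // ¬ e.IsDiag}

/-- An edge configuration on `[n]`. -/
abbrev Config (n : ℕ) := Edge n → Bool

/-- Bernoulli(p) weight of a state. -/
def bern (p : ℝ) (b : Bool) : ℝ := if b then p else 1 - p

/-- Weight of a configuration under the static Erdős–Rényi measure `μ_{n,p}`. -/
def staticWeight (n : ℕ) (p : ℝ) (ω : Config n) : ℝ := ∏ e : Edge n, bern p (ω e)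

/-- Expectation under the static Erdős–Rényi measure `μ_{n,p}`. -/
def staticExp (n : ℕ) (p : ℝ) (f : Config n → ℝ) : ℝ :=
  ∑ ω : Config n, staticWeight n p ω * f ω

/-- Variance under the static Erdős–Rényi measure `μ_{n,p}`. -/
def staticVar (n : ℕ) (p : ℝ) (f : Config n → ℝ) : ℝ :=
  staticExp n p (fun ω => (f ω - staticExp n p f) ^ 2)

/-- `A` is a clique of the graph `G(ω)`: every pair of distinct elements of `A`
is an edge of `G(ω)`. -/
def IsCliqueOf {n : ℕ} (A : Finset (Fin n)) (ω : Config n) : Prop :=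
  ∀ e : Edge n, e.1 ∈ A.sym2 → ω e = true

/-- The clique count `f_{n,j}(ω)`: the number of `(j+1)`-element subsets of `[n]`
all of whose pairs are edges of `G(ω)`. -/
def cliqueCount (n j : ℕ) (ω : Config n) : ℕ :=
  ((Finset.powersetCard (j + 1) (Finset.univ : Finset (Fin n))).filter
    (fun A => IsCliqueOf A ω)).card

/-- Real-valued clique count. -/
def cliqueCountR (n j : ℕ) (ω : Config n) : ℝ := (cliqueCount n j ω : ℝ)

/-- The Euler characteristic `χ_n(ω) = Σ_{j=0}^{n-1} (-1)^j f_{n,j}(ω)`. -/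
def eulerChar (n : ℕ) (ω : Config n) : ℝ :=
  ∑ j ∈ Finset.range n, (-1 : ℝ) ^ j * cliqueCountR n j ω

/-- Transition probability of the stationary on/off Markov chain with invariant
law Bernoulli(p) over a time increment `s`. -/
def transP (lam p s : ℝ) (b b' : Bool) : ℝ :=
  if b then (if b' then p + (1 - p) * Real.exp (-lam * s)
             else (1 - p) * (1 - Real.exp (-lam * s)))
  else (if b' then p * (1 - Real.exp (-lam * s))
        else (1 - p) + p * Real.exp (-lam * s))

/-- Weight of a trajectory of the stationary on/off Markov chain observed at the
times `t 0 ≤ t 1 ≤ …`. -/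
def pathWeight (lam p : ℝ) {m : ℕ} (t : Fin m → ℝ) (b : Fin m → Bool) : ℝ :=
  ∏ i : Fin m,
    if (i : ℕ) = 0 then bern p (b i)
    else transP lam p (t i - t ⟨(i : ℕ) - 1, lt_of_le_of_lt (Nat.sub_le _ _) i.isLt⟩)
      (b ⟨(i : ℕ) - 1, lt_of_le_of_lt (Nat.sub_le _ _) i.isLt⟩) (b i)

/-- Weight of an `m`-tuple of edge configurations under the `m`-time dynamic
Erdős–Rényi measure `μ_{n,p}^{(t 0, …, t (m-1))}`. -/
def dynWeight (lam p : ℝ) (n : ℕ) {m : ℕ} (t : Fin m → ℝ) (ω : Fin m → Config n) : ℝ :=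
  ∏ e : Edge n, pathWeight lam p t (fun i => ω i e)

/-- Expectation under the `m`-time dynamic Erdős–Rényi measure. -/
def dynExp (lam p : ℝ) (n : ℕ) {m : ℕ} (t : Fin m → ℝ) (F : (Fin m → Config n) → ℝ) : ℝ :=
  ∑ ω : Fin m → Config n, dynWeight lam p n t ω * F ω

/-- The normalized clique count `f̄_{n,k}` (under the measure `μ_{n,p}`). -/
def fbar (n k : ℕ) (p : ℝ) (ω : Config n) : ℝ :=
  (cliqueCountR n k ω - staticExp n p (cliqueCountR n k)) /
    Real.sqrt (staticVar n p (cliqueCountR n k))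

/-- The normalized Euler characteristic `χ̄_n` (under the measure `μ_{n,p}`). -/
def chibar (n : ℕ) (p : ℝ) (ω : Config n) : ℝ :=
  (eulerChar n ω - staticExp n p (eulerChar n)) /
    Real.sqrt (staticVar n p (eulerChar n))

/-- The clique indicator `1_A(ω)` as a real number. -/
def cliqueInd {n : ℕ} (A : Finset (Fin n)) (ω : Config n) : ℝ :=
  if IsCliqueOf A ω then 1 else 0

/-- A quadruple of subsets has an independent set if one of them shares at most
one vertex with each of the others. -/
def HasIndepSet {n : ℕ} (A : Fin 4 → Finset (Fin n)) : Prop :=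
  ∃ q : Fin 4, ∀ r : Fin 4, r ≠ q → ((A q) ∩ (A r)).card ≤ 1

/-- The quantity `g(h; Ā)` built from clique indicators at three times. -/
def gQuad {n : ℕ} (A : Fin 4 → Finset (Fin n)) (ω : Fin 3 → Config n) : ℝ :=
  (cliqueInd (A 0) (ω 2) - cliqueInd (A 0) (ω 1)) *
  (cliqueInd (A 1) (ω 2) - cliqueInd (A 1) (ω 1)) *
  (cliqueInd (A 2) (ω 1) - cliqueInd (A 2) (ω 0)) *
  (cliqueInd (A 3) (ω 1) - cliqueInd (A 3) (ω 0))

/-- `ver(Ā)`: inclusion–exclusion count of vertices. -/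
def verA {n : ℕ} (A : Fin 4 → Finset (Fin n)) : ℤ :=
  (∑ q : Fin 4, ((A q).card : ℤ))
  - (∑ q : Fin 4, ∑ r : Fin 4, if q < r then (((A q) ∩ (A r)).card : ℤ) else 0)
  + (∑ q : Fin 4, ∑ r : Fin 4, ∑ s : Fin 4,
      if q < r ∧ r < s then (((A q) ∩ (A r) ∩ (A s)).card : ℤ) else 0)
  - ((A 0 ∩ A 1 ∩ A 2 ∩ A 3).card : ℤ)

/-- `pair(Ā)`: inclusion–exclusion count of potential edges. -/
def pairA {n : ℕ} (A : Fin 4 → Finset (Fin n)) : ℤ :=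
  (∑ q : Fin 4, (Nat.choose (A q).card 2 : ℤ))
  - (∑ q : Fin 4, ∑ r : Fin 4, if q < r then (Nat.choose ((A q) ∩ (A r)).card 2 : ℤ) else 0)
  + (∑ q : Fin 4, ∑ r : Fin 4, ∑ s : Fin 4,
      if q < r ∧ r < s then (Nat.choose ((A q) ∩ (A r) ∩ (A s)).card 2 : ℤ) else 0)
  - (Nat.choose (A 0 ∩ A 1 ∩ A 2 ∩ A 3).card 2 : ℤ)

/-! By inclusion–exclusion, `ver(Ā)` and `pair(Ā)` count the vertices and the pairs covered by
the four sets. With `p = n^α` the exponent `ver + α·pair` is affine in `α`, so it suffices to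
show `m·ver ≤ pair + 2m² − 2m + 2` for `m = k` and `m = k + 1` and interpolate, since `α` lies
between `−1/k` and `−1/(k+1)`. Adding the sets one at a time, a set of size `s` meeting its
predecessors in `d` vertices adds `s − d` vertices and at least `C(s,2) − C(d,2)` pairs, and
`m(s − d) ≤ C(s,2) − C(d,2) + C(m+1−d, 2)`. Without an independent set the sets can be ordered
so that the second and the last meet their predecessors in at least two vertices; the error terms
then total `2C(m+1,2) + 2C(m−1,2) = 2m² − 2m + 2`. Starting with the largest set leaves a surplus
`C(s₀ − m, 2)`, quadratic in `i + j`, which gives part (ii). -/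

namespace Finset

variable {X : Type*} [DecidableEq X]

theorem card_union₃ (a b c : Finset X) :
    (#(a ∪ b ∪ c) : ℤ) = #a + #b + #c - #(a ∩ b) - #(a ∩ c) - #(b ∩ c) + #(a ∩ b ∩ c) := by
  have hab := card_union_add_card_inter a b
  have habc := card_union_add_card_inter (a ∪ b) c
  have hacbc := card_union_add_card_inter (a ∩ c) (b ∩ c)
  rw [union_inter_distrib_right] at habc
  rw [inter_inter_inter_comm, inter_self] at hacbc
  omega

theorem card_union₄ (a b c d : Finset X) :
    (#(a ∪ b ∪ c ∪ d) : ℤ) = #a + #b + #c + #d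
      - #(a ∩ b) - #(a ∩ c) - #(a ∩ d) - #(b ∩ c) - #(b ∩ d) - #(c ∩ d)
      + #(a ∩ b ∩ c) + #(a ∩ b ∩ d) + #(a ∩ c ∩ d) + #(b ∩ c ∩ d) - #(a ∩ b ∩ c ∩ d) := by
  have habcd := card_union_add_card_inter (a ∪ b ∪ c) d
  rw [union_inter_distrib_right, union_inter_distrib_right] at habcd
  have h₃ := card_union₃ (a ∩ d) (b ∩ d) (c ∩ d)
  have h₃' := card_union₃ a b c
  simp only [inter_inter_inter_comm, inter_self] at h₃
  omega

theorem powersetCard_inter (n : ℕ) (s t : Finset X) :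
    powersetCard n (s ∩ t) = powersetCard n s ∩ powersetCard n t := by
  ext u
  simp only [mem_powersetCard, mem_inter, subset_inter_iff]
  tauto

end Finset

theorem verA_eq_card_union {n : ℕ} (A : Fin 4 → Finset (Fin n)) :
    verA A = #(A 0 ∪ A 1 ∪ A 2 ∪ A 3) := by
  rw [card_union₄]
  simp only [verA, Fin.sum_univ_four]
  norm_num [Fin.lt_def, inter_assoc]
  ring

theorem pairA_eq_card_union {n : ℕ} (A : Fin 4 → Finset (Fin n)) :
    pairA A = #(powersetCard 2 (A 0) ∪ powersetCard 2 (A 1) ∪ powersetCard 2 (A 2)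
      ∪ powersetCard 2 (A 3)) := by
  rw [card_union₄]
  simp only [← powersetCard_inter, card_powersetCard, pairA, Fin.sum_univ_four]
  norm_num [Fin.lt_def, inter_assoc]
  ring

namespace Nat

theorem mul_add_choose_two_sub_le (m s : ℕ) :
    m * s + (s - m).choose 2 ≤ s.choose 2 + (m + 1).choose 2 := by
  suffices hq : ((m * s + (s - m).choose 2 : ℕ) : ℚ) ≤ (s.choose 2 + (m + 1).choose 2 : ℕ) by
    exact_mod_cast hq
  push_cast [Nat.cast_choose_two]
  rcases le_total m s with h | h
  · rw [Nat.cast_sub h]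
    nlinarith
  · rw [Nat.sub_eq_zero_of_le h]
    have : (s : ℚ) ≤ m := by exact_mod_cast h
    nlinarith

theorem mul_sub_add_choose_two_le {d s : ℕ} (m : ℕ) (h : d ≤ s) :
    m * (s - d) + d.choose 2 ≤ s.choose 2 + (m + 1 - d).choose 2 := by
  suffices hq : ((m * (s - d) + d.choose 2 : ℕ) : ℚ) ≤ (s.choose 2 + (m + 1 - d).choose 2 : ℕ) by
    exact_mod_cast hq
  push_cast [Nat.cast_choose_two, Nat.cast_sub h]
  have hds : (d : ℚ) ≤ s := by exact_mod_cast h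
  rcases le_total d (m + 1) with h' | h'
  · rw [Nat.cast_sub h']
    push_cast
    rcases le_or_gt s m with h'' | h''
    · have : (s : ℚ) ≤ m := by exact_mod_cast h''
      nlinarith
    · have : (m : ℚ) + 1 ≤ s := by exact_mod_cast h''
      nlinarith
  · rw [Nat.sub_eq_zero_of_le h']
    have : (m : ℚ) + 1 ≤ d := by exact_mod_cast h'
    nlinarith

end Nat

namespace Finset

variable {X : Type*} [DecidableEq X]

theorem union_powersetCard_subset {n : ℕ} {U : Finset X} {P : Finset (Finset X)}
    (hP : P ⊆ powersetCard n U) (B : Finset X) :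
    P ∪ powersetCard n B ⊆ powersetCard n (U ∪ B) :=
  union_subset (hP.trans (powersetCard_mono subset_union_left))
    (powersetCard_mono subset_union_right)

theorem mul_card_union_add_card_le {U : Finset X} {P : Finset (Finset X)}
    (hP : P ⊆ powersetCard 2 U) (B : Finset X) (m : ℕ) :
    m * #(U ∪ B) + #P ≤ m * #U + #(P ∪ powersetCard 2 B) + (m + 1 - #(B ∩ U)).choose 2 := by
  have hV : #(U ∪ B) = #U + (#B - #(B ∩ U)) := by
    have h := card_union_add_card_inter U B
    have : #(B ∩ U) ≤ #B := card_le_card inter_subset_left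
    rw [inter_comm] at h
    omega
  have hE := card_union_add_card_inter P (powersetCard 2 B)
  have hPB : #(P ∩ powersetCard 2 B) ≤ (#(B ∩ U)).choose 2 := by
    rw [← card_powersetCard, inter_comm, powersetCard_inter]
    exact card_le_card (inter_subset_inter_left hP)
  have hstep := Nat.mul_sub_add_choose_two_le m (card_le_card (inter_subset_left : B ∩ U ⊆ B))
  rw [card_powersetCard] at hE
  rw [hV, mul_add]
  omega

theorem mul_card_union₄_add_le (m : ℕ) {B₀ B₁ B₂ B₃ : Finset X} (h₁ : 2 ≤ #(B₁ ∩ B₀))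
    (h₃ : 2 ≤ #(B₃ ∩ (B₀ ∪ B₁ ∪ B₂))) :
    m * #(B₀ ∪ B₁ ∪ B₂ ∪ B₃) + (#B₀ - m).choose 2 ≤
      #(powersetCard 2 B₀ ∪ powersetCard 2 B₁ ∪ powersetCard 2 B₂ ∪ powersetCard 2 B₃)
        + 2 * ((m + 1).choose 2 + (m - 1).choose 2) := by
  have hP₁ := union_powersetCard_subset (subset_refl (powersetCard 2 B₀)) B₁
  have hP₂ := union_powersetCard_subset hP₁ B₂
  have s₀ := Nat.mul_add_choose_two_sub_le m #B₀
  have s₁ := mul_card_union_add_card_le (subset_refl (powersetCard 2 B₀)) B₁ m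
  have s₂ := mul_card_union_add_card_le hP₁ B₂ m
  have s₃ := mul_card_union_add_card_le hP₂ B₃ m
  have c₁ : (m + 1 - #(B₁ ∩ B₀)).choose 2 ≤ (m - 1).choose 2 := Nat.choose_le_choose 2 (by omega)
  have c₂ : (m + 1 - #(B₂ ∩ (B₀ ∪ B₁))).choose 2 ≤ (m + 1).choose 2 :=
    Nat.choose_le_choose 2 (Nat.sub_le _ _)
  have c₃ : (m + 1 - #(B₃ ∩ (B₀ ∪ B₁ ∪ B₂))).choose 2 ≤ (m - 1).choose 2 :=
    Nat.choose_le_choose 2 (by omega)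
  rw [card_powersetCard] at s₁
  omega

end Finset

theorem Fin.exists_insert_eq_univ :
    ∀ a b : Fin 4, a ≠ b → ∃ c d : Fin 4, ({a, b, c, d} : Finset (Fin 4)) = univ := by
  decide

theorem Fin.sup_four_eq_of_insert_eq_univ {α : Type*} [SemilatticeSup α] [OrderBot α]
    (f : Fin 4 → α) {a b c d : Fin 4} (h : ({a, b, c, d} : Finset (Fin 4)) = univ) :
    f a ⊔ f b ⊔ f c ⊔ f d = f 0 ⊔ f 1 ⊔ f 2 ⊔ f 3 := by
  have h₀ : ({0, 1, 2, 3} : Finset (Fin 4)) = univ := by decide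
  simpa [sup_assoc] using congrArg (Finset.sup · f) (h.trans h₀.symm)

theorem exists_order_of_not_hasIndepSet {n : ℕ} {A : Fin 4 → Finset (Fin n)}
    (hA : ¬ HasIndepSet A) (a : Fin 4) :
    ∃ b c d : Fin 4, ({a, b, c, d} : Finset (Fin 4)) = univ ∧
      2 ≤ #(A b ∩ A a) ∧ 2 ≤ #(A d ∩ (A a ∪ A b ∪ A c)) := by
  simp only [HasIndepSet, not_exists, not_forall, not_le] at hA
  obtain ⟨b, hba, hab⟩ := hA a
  obtain ⟨c, d, hu⟩ := Fin.exists_insert_eq_univ a b (Ne.symm hba)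
  obtain ⟨r, hrd, hdr⟩ := hA d
  have hr : r = a ∨ r = b ∨ r = c := by
    have : r ∈ ({a, b, c, d} : Finset (Fin 4)) := hu ▸ mem_univ r
    simpa [hrd] using this
  have hsub : A r ⊆ A a ∪ A b ∪ A c := by
    rcases hr with rfl | rfl | rfl <;> intro x <;> simp only [mem_union] <;> tauto
  exact ⟨b, c, d, hu, by rw [inter_comm]; omega,
    Nat.le_trans hdr (card_le_card (inter_subset_inter_left hsub))⟩

theorem mul_verA_add_le_pairA {n : ℕ} {A : Fin 4 → Finset (Fin n)} (hA : ¬ HasIndepSet A)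
    (a : Fin 4) (m : ℕ) :
    m * verA A + (#(A a) - m).choose 2 ≤ pairA A + 2 * ((m + 1).choose 2 + (m - 1).choose 2) := by
  obtain ⟨b, c, d, hu, h₁, h₃⟩ := exists_order_of_not_hasIndepSet hA a
  have h := mul_card_union₄_add_le m h₁ h₃
  have hV := Fin.sup_four_eq_of_insert_eq_univ A hu
  have hE := Fin.sup_four_eq_of_insert_eq_univ (fun q => powersetCard 2 (A q)) hu
  simp only [sup_eq_union] at hV hE
  rw [hV, hE] at h
  rw [verA_eq_card_union, pairA_eq_card_union]
  exact_mod_cast h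

theorem Nat.mul_le_choose_two_sub {k m t M : ℕ} (hkm : k ≤ m) (hmk : m ≤ k + 1)
    (hM : 16 * k + 17 + t ≤ 2 * M) : m * (2 * k + 2 * t) ≤ (M - m).choose 2 := by
  suffices hq : ((m * (2 * k + 2 * t) : ℕ) : ℚ) ≤ ((M - m).choose 2 : ℕ) by exact_mod_cast hq
  have hmM : m ≤ M := by omega
  push_cast [Nat.cast_choose_two, Nat.cast_sub hmM]
  have h₁ : (k : ℚ) ≤ m := by exact_mod_cast hkm
  have h₂ : (m : ℚ) ≤ k + 1 := by exact_mod_cast hmk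
  have h₃ : 16 * (k : ℚ) + 17 + t ≤ 2 * M := by exact_mod_cast hM
  have h₄ : (0 : ℚ) ≤ t := by positivity
  nlinarith

theorem add_mul_le_of_consecutive_bounds {k α v e D : ℝ} (hk : 0 < k)
    (hα : α ∈ Set.Ioo (-(1 / k)) (-(1 / (k + 1))))
    (h₁ : k * (v + D) ≤ e + 2 * (k ^ 2 - k + 1))
    (h₂ : (k + 1) * (v + D) ≤ e + 2 * ((k + 1) ^ 2 - (k + 1) + 1)) :
    v + α * e ≤ 4 * k - D + α * (2 * k * (k + 1) - 2) := by
  have hk' : 0 < k + 1 := by linarith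
  have hα₁ := mul_lt_mul_of_pos_right hα.1 hk
  have hα₂ := mul_lt_mul_of_pos_right hα.2 hk'
  rw [neg_mul, one_div, inv_mul_cancel₀ hk.ne'] at hα₁
  rw [neg_mul, one_div, inv_mul_cancel₀ hk'.ne'] at hα₂
  rcases le_total e (2 * k * (k + 1) - 2) with he | he
  · refine le_of_mul_le_mul_left ?_ hk
    nlinarith [mul_nonneg (by linarith : 0 ≤ α * k + 1)
      (by linarith : 0 ≤ 2 * k * (k + 1) - 2 - e)]
  · refine le_of_mul_le_mul_left ?_ hk'
    nlinarith [mul_nonneg (by linarith : 0 ≤ -(α * (k + 1)) - 1)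
      (by linarith : 0 ≤ e - (2 * k * (k + 1) - 2))]

theorem zpow_mul_rpow_zpow {x : ℝ} (hx : 0 < x) (v e : ℤ) (α : ℝ) :
    x ^ v * (x ^ α) ^ e = x ^ (v + α * e) := by
  rw [Real.rpow_add hx, Real.rpow_intCast, ← Real.rpow_intCast (x ^ α) e, ← Real.rpow_mul hx.le]

theorem pow_mul_rpow_pow_div_pow {x : ℝ} (hx : 0 < x) (a b c : ℕ) (α : ℝ) :
    x ^ a * (x ^ α) ^ b / x ^ c = x ^ ((a : ℝ) - c + α * b) := by
  rw [Real.rpow_add hx, Real.rpow_sub hx, ← Real.rpow_natCast (x ^ α) b, ← Real.rpow_mul hx.le]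
  simp only [Real.rpow_natCast]
  ring

theorem zpow_mul_rpow_zpow_le {k : ℕ} (hk : 1 ≤ k) {α : ℝ}
    (hα : α ∈ Set.Ioo (-(1 / (k : ℝ))) (-(1 / ((k : ℝ) + 1)))) {n : ℕ} (hn : 1 ≤ n) {v e : ℤ}
    {D : ℕ} (h : ∀ m ∈ ({k, k + 1} : Finset ℕ),
      m * (v + D) ≤ e + 2 * ((m + 1).choose 2 + (m - 1).choose 2)) :
    (n : ℝ) ^ v * ((n : ℝ) ^ α) ^ e ≤
      (n : ℝ) ^ (4 * k) * ((n : ℝ) ^ α) ^ (4 * (k + 1).choose 2 - 2) / (n : ℝ) ^ D := by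
  have hn₀ : (0 : ℝ) < n := by exact_mod_cast hn
  have hc : ((4 * (k + 1).choose 2 - 2 : ℕ) : ℝ) = 2 * k * (k + 1) - 2 := by
    have : 1 ≤ (k + 1).choose 2 := Nat.choose_pos (by omega)
    push_cast [Nat.cast_sub (by omega : 2 ≤ 4 * (k + 1).choose 2), Nat.cast_choose_two]
    ring
  have hb : ∀ m ∈ ({k, k + 1} : Finset ℕ), (m : ℝ) * (v + D) ≤ e + 2 * (m ^ 2 - m + 1) := by
    intro m hm
    have hm₁ : 1 ≤ m := by simp only [mem_insert, mem_singleton] at hm; omega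
    have h' : ((m * (v + D) : ℤ) : ℝ) ≤
        ((e + 2 * ((m + 1).choose 2 + (m - 1).choose 2) : ℤ) : ℝ) := by
      exact_mod_cast h m hm
    push_cast [Nat.cast_choose_two, Nat.cast_sub hm₁] at h'
    linarith
  rw [zpow_mul_rpow_zpow hn₀, pow_mul_rpow_pow_div_pow hn₀, hc]
  refine Real.rpow_le_rpow_of_exponent_le (by exact_mod_cast hn) ?_
  push_cast
  refine add_mul_le_of_consecutive_bounds (by positivity) hα (hb k (by simp)) ?_
  exact_mod_cast hb (k + 1) (by simp)

theorem verA_pairA_bound_general (k : ℕ) (hk : 1 ≤ k) (α : ℝ)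
    (hα : α ∈ Set.Ioo (-(1 / (k : ℝ))) (-(1 / ((k : ℝ) + 1))))
    (n : ℕ) (hn : 1 ≤ n) (i j : ℕ)
    (A : Fin 4 → Finset (Fin n))
    (hA0 : (A 0).card = i + 1)
    (hA2 : (A 2).card = j + 1)
    (hind : ¬ HasIndepSet A) :
    (n : ℝ) ^ (verA A) * ((n : ℝ) ^ α) ^ (pairA A) ≤
        (n : ℝ) ^ (4 * k) * ((n : ℝ) ^ α) ^ (4 * Nat.choose (k + 1) 2 - 2) ∧
      (16 * k + 15 ≤ i + j →
        (n : ℝ) ^ (verA A) * ((n : ℝ) ^ α) ^ (pairA A) ≤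
          (n : ℝ) ^ (4 * k) * ((n : ℝ) ^ α) ^ (4 * Nat.choose (k + 1) 2 - 2) /
            (n : ℝ) ^ (2 * k + 2 * (i + j - 16 * k - 15))) := by
  obtain ⟨a, ha⟩ : ∃ a, i + j + 2 ≤ 2 * #(A a) := by
    rcases le_total j i with h | h
    · exact ⟨0, by omega⟩
    · exact ⟨2, by omega⟩
  have key (D : ℕ) (hD : ∀ m ∈ ({k, k + 1} : Finset ℕ), m * D ≤ (#(A a) - m).choose 2) :=
    zpow_mul_rpow_zpow_le hk hα hn (v := verA A) (e := pairA A) (D := D) fun m hm => by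
      have h₁ := mul_verA_add_le_pairA hind a m
      have h₂ : ((m * D : ℕ) : ℤ) ≤ ((#(A a) - m).choose 2 : ℕ) := by exact_mod_cast hD m hm
      push_cast at h₂ ⊢
      linarith
  refine ⟨by simpa using key 0 (by simp), fun hij => key _ fun m hm => ?_⟩
  simp only [mem_insert, mem_singleton] at hm
  exact Nat.mul_le_choose_two_sub (by omega) (by omega) (by omega)

/-- Bounds on `n^{ver(Ā)} p^{pair(Ā)}` for quadruples without
an independent set, with `p = n^α`, `α ∈ (-1/k, -1/(k+1))`. -/
theorem verA_pairA_bound (k : ℕ) (hk : 1 ≤ k) (α : ℝ)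
    (hα : α ∈ Set.Ioo (-(1 / (k : ℝ))) (-(1 / ((k : ℝ) + 1))))
    (n : ℕ) (hn : 1 ≤ n) (i j : ℕ) (hi : i ≤ n - 1) (hj : j ≤ n - 1)
    (A : Fin 4 → Finset (Fin n))
    (hA0 : (A 0).card = i + 1) (hA1 : (A 1).card = i + 1)
    (hA2 : (A 2).card = j + 1) (hA3 : (A 3).card = j + 1)
    (hind : ¬ HasIndepSet A) :
    (n : ℝ) ^ (verA A) * ((n : ℝ) ^ α) ^ (pairA A) ≤
        (n : ℝ) ^ (4 * k) * ((n : ℝ) ^ α) ^ (4 * Nat.choose (k + 1) 2 - 2) ∧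
      (16 * k + 15 ≤ i + j →
        (n : ℝ) ^ (verA A) * ((n : ℝ) ^ α) ^ (pairA A) ≤
          (n : ℝ) ^ (4 * k) * ((n : ℝ) ^ α) ^ (4 * Nat.choose (k + 1) 2 - 2) /
            (n : ℝ) ^ (2 * k + 2 * (i + j - 16 * k - 15))) :=
  verA_pairA_bound_general k hk α hα n hn i j A hA0 hA2 hind
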